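/- Let X be a complex Banach space, n ≥ 1, x ∈ X, and let f : [0,∞)^n → X be locally Bochner integrable and bounded (i.e. sup{‖f(t)‖ : t ∈ [0,∞)^n} < ∞). If f(t₁,…,tₙ) → x as t₁ → +∞, …, tₙ → +∞ (in the sense that for every ε > 0 there is M with ‖f(t) − x‖ < ε whenever all tⱼ > M), then for all real λⱼ > 0 one has λ ∈ Ω_abs(f), and λ₁·…·λₙ·(Lf)(λ₁,…,λₙ) → x as (λ₁,…,λₙ) → (0⁺,…,0⁺) within (0,∞)^n. -/

import Mathlib

/-! The weight `ρ_λ(t) = ∏ⱼ λⱼ e^{-λⱼ tⱼ}` is a probability density on `[0,∞)^n` and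
`λ₁⋯λₙ (Lf)(λ) = ∫ ρ_λ f`, so `λ₁⋯λₙ (Lf)(λ) - x = ∫ ρ_λ (f - x)`. Choose `M` with
`‖f - x‖ < ε/2` where all `tⱼ > M`. Off that region some `tⱼ ≤ M`; there `‖f - x‖` is only
bounded, but the strip `{tⱼ ≤ M}` has `ρ_λ`-mass `1 - e^{-λⱼ M} ≤ λⱼ M`, which vanishes as
`λ → 0`. -/

open MeasureTheory Set Filter

noncomputable section

/-- The nonnegative orthant `[0,∞)^n`. -/
def orthant (n : ℕ) : Set (Fin n → ℝ) := {t | ∀ j, 0 ≤ t j}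

/-- The box `[0,t₁] × … × [0,tₙ]`. -/
def box {n : ℕ} (t : Fin n → ℝ) : Set (Fin n → ℝ) := Set.univ.pi fun j => Set.Icc 0 (t j)

variable {X : Type*} [NormedAddCommGroup X] [NormedSpace ℂ X]

/-- The Laplace kernel `t ↦ e^{-λ₁t₁-…-λₙtₙ} f(t)`. -/
def lapKer {n : ℕ} (lam : Fin n → ℂ) (f : (Fin n → ℝ) → X) : (Fin n → ℝ) → X :=
  fun t => Complex.exp (-(∑ j, lam j * (t j : ℂ))) • f t

/-- Absolute convergence of the Laplace integral at `lam`: membership in `Ω_abs(f)`. -/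
def OmegaAbs {n : ℕ} (f : (Fin n → ℝ) → X) (lam : Fin n → ℂ) : Prop :=
  IntegrableOn (lapKer lam f) (orthant n)

/-- The (absolutely convergent) Laplace transform `(Lf)(λ)`. -/
def lapTr {n : ℕ} (f : (Fin n → ℝ) → X) (lam : Fin n → ℂ) : X :=
  ∫ t in orthant n, lapKer lam f t

/-- The truncated Laplace integral `I(f,λ,t)`. -/
def truncInt {n : ℕ} (f : (Fin n → ℝ) → X) (lam : Fin n → ℂ) (t : Fin n → ℝ) : X :=
  ∫ s in box t, lapKer lam f s

/-- Convergence of the Laplace integral at `lam` with value `F`. -/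
def LapConvTo {n : ℕ} (f : (Fin n → ℝ) → X) (lam : Fin n → ℂ) (F : X) : Prop :=
  ∀ ε > 0, ∃ M > 0, ∀ t : Fin n → ℝ, (∀ j, M < t j) → ‖truncInt f lam t - F‖ < ε

/-- Convergence of the Laplace integral at `lam`: membership in `Ω(f)`. -/
def OmegaConv {n : ℕ} (f : (Fin n → ℝ) → X) (lam : Fin n → ℂ) : Prop :=
  ∃ F, LapConvTo f lam F

/-- Boundedness of all truncated Laplace integrals: membership in `Ω_b(f)`. -/
def OmegaBdd {n : ℕ} (f : (Fin n → ℝ) → X) (lam : Fin n → ℂ) : Prop :=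
  ∃ C, ∀ t : Fin n → ℝ, ‖truncInt f lam t‖ ≤ C

/-- Local Bochner integrability on `[0,∞)^n`. -/
def LocInt {n : ℕ} (f : (Fin n → ℝ) → X) : Prop :=
  ∀ t : Fin n → ℝ, IntegrableOn f (box t)

section OneDim

variable {a : ℝ}

lemma integrableOn_mul_exp_neg_mul_Ici (ha : 0 < a) :
    IntegrableOn (fun u : ℝ => a * Real.exp (-a * u)) (Ici 0) :=
  ((integrableOn_Ici_iff_integrableOn_Ioi).2
    (integrableOn_exp_mul_Ioi (neg_neg_of_pos ha) 0)).const_mul a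

lemma integral_mul_exp_neg_mul_Ici (ha : 0 < a) :
    ∫ u in Ici (0 : ℝ), a * Real.exp (-a * u) = 1 := by
  rw [integral_Ici_eq_integral_Ioi, integral_const_mul,
    integral_exp_mul_Ioi (neg_neg_of_pos ha), mul_zero, Real.exp_zero]
  field_simp [ha.ne']

lemma setIntegral_Icc_mul_exp_neg_mul_le (ha : 0 ≤ a) {M : ℝ} (hM : 0 ≤ M) :
    ∫ u in Icc (0 : ℝ) M, a * Real.exp (-a * u) ≤ a * M := by
  have hbound : ∀ u ∈ Icc (0 : ℝ) M, ‖a * Real.exp (-a * u)‖ ≤ a := fun u hu => by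
    rw [Real.norm_of_nonneg (by positivity)]
    exact mul_le_of_le_one_right ha (Real.exp_le_one_iff.2 (by nlinarith [hu.1]))
  calc _ ≤ ‖∫ u in Icc (0 : ℝ) M, a * Real.exp (-a * u)‖ := Real.le_norm_self _
    _ ≤ a * volume.real (Icc (0 : ℝ) M) := norm_setIntegral_le_of_norm_le_const (by simp) hbound
    _ = a * M := by simp [hM]

end OneDim

section Pi

variable {ι : Type*} [Fintype ι] (s : ι → Set ℝ) (g : ι → ℝ → ℝ)

lemma integrableOn_univ_pi_prod (hg : ∀ i, IntegrableOn (g i) (s i)) :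
    IntegrableOn (fun t : ι → ℝ => ∏ i, g i (t i)) (univ.pi s) := by
  rw [IntegrableOn, volume_pi, Measure.restrict_pi_pi]
  exact Integrable.fintype_prod hg

lemma setIntegral_univ_pi_prod :
    ∫ t in univ.pi s, ∏ i, g i (t i) = ∏ i, ∫ u in s i, g i u := by
  rw [volume_pi, Measure.restrict_pi_pi, integral_fintype_prod_eq_prod]

end Pi

section Orthant

variable {n : ℕ}

lemma orthant_eq_univ_pi (n : ℕ) : orthant n = univ.pi fun _ => Ici 0 := by
  ext t; simp only [orthant, mem_univ_pi, mem_Ici]; rfl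

lemma measurableSet_orthant (n : ℕ) : MeasurableSet (orthant n) := by
  rw [orthant_eq_univ_pi]; exact .univ_pi fun _ => measurableSet_Ici

lemma orthant_inter_setOf_le (j : Fin n) (M : ℝ) :
    orthant n ∩ {t | t j ≤ M} = univ.pi (Function.update (fun _ => Ici 0) j (Icc 0 M)) := by
  ext t
  simp only [orthant, mem_inter_iff, mem_univ_pi, Function.update_apply]
  constructor
  · rintro ⟨h0, hM⟩ i
    split_ifs with hij
    · exact ⟨h0 i, hij ▸ hM⟩
    · exact h0 i
  · intro h
    refine ⟨fun i => ?_, (by simpa using h j : t j ∈ Icc 0 M).2⟩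
    have hi := h i
    split_ifs at hi
    exacts [hi.1, hi]

lemma orthant_subset_iUnion_box (n : ℕ) : orthant n ⊆ ⋃ k : ℕ, box fun _ : Fin n => (k : ℝ) := by
  intro t ht
  obtain ⟨k, hk⟩ := exists_nat_ge (∑ j, t j)
  refine mem_iUnion.2 ⟨k, fun j _ => ⟨ht j, le_trans ?_ hk⟩⟩
  exact Finset.single_le_sum (fun i _ => ht i) (Finset.mem_univ j)

lemma LocInt.aestronglyMeasurable_orthant {E : Type*} [NormedAddCommGroup E]
    {f : (Fin n → ℝ) → E} (hf : LocInt f) :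
    AEStronglyMeasurable f (volume.restrict (orthant n)) :=
  (aestronglyMeasurable_iUnion_iff.2 fun _ => (hf _).aestronglyMeasurable).mono_set
    (orthant_subset_iUnion_box n)

end Orthant

section ExpDensity

variable {n : ℕ} {lam : Fin n → ℝ}

def expDensity (lam t : Fin n → ℝ) : ℝ := ∏ j, lam j * Real.exp (-lam j * t j)

lemma continuous_expDensity (lam : Fin n → ℝ) : Continuous (expDensity lam) := by
  unfold expDensity; fun_prop

lemma expDensity_nonneg (hlam : ∀ j, 0 ≤ lam j) (t : Fin n → ℝ) : 0 ≤ expDensity lam t :=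
  Finset.prod_nonneg fun j _ => mul_nonneg (hlam j) (Real.exp_pos _).le

lemma expDensity_eq_prod_mul_exp (lam t : Fin n → ℝ) :
    expDensity lam t = (∏ j, lam j) * Real.exp (-∑ j, lam j * t j) := by
  simp only [expDensity, Finset.prod_mul_distrib, Real.exp_sum, neg_mul,
    ← Finset.sum_neg_distrib]

lemma integrableOn_expDensity (hlam : ∀ j, 0 < lam j) :
    IntegrableOn (expDensity lam) (orthant n) := by
  rw [orthant_eq_univ_pi]
  exact integrableOn_univ_pi_prod _ (fun j u => lam j * Real.exp (-lam j * u))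
    fun j => integrableOn_mul_exp_neg_mul_Ici (hlam j)

lemma setIntegral_expDensity (hlam : ∀ j, 0 < lam j) :
    ∫ t in orthant n, expDensity lam t = 1 := by
  rw [orthant_eq_univ_pi]
  unfold expDensity
  rw [setIntegral_univ_pi_prod _ fun j u => lam j * Real.exp (-lam j * u)]
  exact Finset.prod_eq_one fun j _ => integral_mul_exp_neg_mul_Ici (hlam j)

lemma setIntegral_indicator_expDensity_le (hlam : ∀ j, 0 < lam j) {M : ℝ} (hM : 0 ≤ M)
    (j : Fin n) :
    ∫ t in orthant n, {t | t j ≤ M}.indicator (expDensity lam) t ≤ lam j * M := by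
  classical
  have hmeas : MeasurableSet {t : Fin n → ℝ | t j ≤ M} :=
    measurableSet_le (measurable_pi_apply j) measurable_const
  rw [integral_indicator hmeas, Measure.restrict_restrict hmeas, inter_comm,
    orthant_inter_setOf_le]
  unfold expDensity
  rw [setIntegral_univ_pi_prod _ fun j u => lam j * Real.exp (-lam j * u),
    Fintype.prod_eq_mul_prod_compl j, Function.update_self,
    Finset.prod_eq_one fun i hi => ?_, mul_one]
  · exact setIntegral_Icc_mul_exp_neg_mul_le (hlam j).le hM
  · rw [Function.update_of_ne (by simpa using hi)]
    exact integral_mul_exp_neg_mul_Ici (hlam i)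

end ExpDensity

section Laplace

variable {n : ℕ} {lam : Fin n → ℝ}

lemma lapKer_ofReal (hlam : ∀ j, lam j ≠ 0) (f : (Fin n → ℝ) → X) (t : Fin n → ℝ) :
    lapKer (fun j => (lam j : ℂ)) f t = (∏ j, lam j)⁻¹ • expDensity lam t • f t := by
  have hexp : Complex.exp (-∑ j, (lam j : ℂ) * (t j : ℂ)) =
      (Real.exp (-∑ j, lam j * t j) : ℂ) := by
    push_cast; rfl
  rw [lapKer, hexp, Complex.coe_smul, expDensity_eq_prod_mul_exp, smul_smul,
    inv_mul_cancel_left₀ (Finset.prod_ne_zero_iff.2 fun j _ => hlam j)]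

lemma prod_smul_lapTr (hlam : ∀ j, lam j ≠ 0) (f : (Fin n → ℝ) → X) :
    (∏ j, (lam j : ℂ)) • lapTr f (fun j => (lam j : ℂ)) =
      ∫ t in orthant n, expDensity lam t • f t := by
  simp_rw [lapTr, lapKer_ofReal hlam, integral_smul, ← Complex.ofReal_prod, Complex.coe_smul]
  exact smul_inv_smul₀ (Finset.prod_ne_zero_iff.2 fun j _ => hlam j) _

lemma integrableOn_expDensity_smul {g : (Fin n → ℝ) → X} {C : ℝ}
    (hg : AEStronglyMeasurable g (volume.restrict (orthant n)))
    (hC : ∀ t ∈ orthant n, ‖g t‖ ≤ C) (hlam : ∀ j, 0 < lam j) :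
    IntegrableOn (fun t => expDensity lam t • g t) (orthant n) := by
  refine ((integrableOn_expDensity hlam).mul_const C).mono'
    ((continuous_expDensity lam).aestronglyMeasurable.smul hg) ?_
  filter_upwards [ae_restrict_mem (measurableSet_orthant n)] with t ht
  have hρ := expDensity_nonneg (fun j => (hlam j).le) t
  rw [norm_smul, Real.norm_of_nonneg hρ]
  exact mul_le_mul_of_nonneg_left (hC t ht) hρ

lemma omegaAbs_of_bounded {f : (Fin n → ℝ) → X} {C : ℝ} (hf : LocInt f)
    (hC : ∀ t ∈ orthant n, ‖f t‖ ≤ C) (hlam : ∀ j, 0 < lam j) :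
    OmegaAbs f fun j => (lam j : ℂ) := by
  rw [OmegaAbs, funext (lapKer_ofReal (fun j => (hlam j).ne') f)]
  exact (integrableOn_expDensity_smul hf.aestronglyMeasurable_orthant hC hlam).smul _

lemma mul_le_add_mul_sum_indicator {w : (Fin n → ℝ) → ℝ} {t : Fin n → ℝ} {b C η M : ℝ}
    (hw : 0 ≤ w t) (hη : 0 ≤ η) (hC : 0 ≤ C) (hbC : b ≤ C) (hbη : (∀ j, M < t j) → b ≤ η) :
    w t * b ≤ η * w t + C * ∑ j, {u | u j ≤ M}.indicator w t := by
  have hsum : 0 ≤ ∑ j, {u : Fin n → ℝ | u j ≤ M}.indicator w t :=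
    Finset.sum_nonneg fun j _ => indicator_apply_nonneg fun _ => hw
  by_cases h : ∀ j, M < t j
  · nlinarith [mul_le_mul_of_nonneg_left (hbη h) hw]
  · push Not at h
    obtain ⟨j, hj⟩ := h
    have hwj : w t ≤ ∑ j, {u : Fin n → ℝ | u j ≤ M}.indicator w t :=
      calc w t = {u : Fin n → ℝ | u j ≤ M}.indicator w t :=
            (indicator_of_mem (s := {u | u j ≤ M}) hj w).symm
        _ ≤ _ := Finset.single_le_sum (f := fun i => {u : Fin n → ℝ | u i ≤ M}.indicator w t)
          (fun i _ => indicator_apply_nonneg fun _ => hw) (Finset.mem_univ j)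
    nlinarith [mul_le_mul_of_nonneg_left hbC hw]

theorem norm_setIntegral_expDensity_smul_sub_le [CompleteSpace X] {g : (Fin n → ℝ) → X}
    {x : X} {C η M : ℝ} (hg : AEStronglyMeasurable g (volume.restrict (orthant n)))
    (hC : ∀ t ∈ orthant n, ‖g t - x‖ ≤ C)
    (hη : ∀ t ∈ orthant n, (∀ j, M < t j) → ‖g t - x‖ ≤ η)
    (hM : 0 ≤ M) (hlam : ∀ j, 0 < lam j) :
    ‖(∫ t in orthant n, expDensity lam t • g t) - x‖ ≤ η + C * M * ∑ j, lam j := by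
  have hρ := expDensity_nonneg fun j => (hlam j).le
  have hC0 : 0 ≤ C := (norm_nonneg _).trans (hC 0 fun _ => le_rfl)
  have hη0 : 0 ≤ η := (norm_nonneg _).trans
    (hη (fun _ => M + 1) (fun _ => by linarith) fun _ => by linarith)
  have hstrip : ∀ j, IntegrableOn ({u | u j ≤ M}.indicator (expDensity lam)) (orthant n) :=
    fun j => (integrableOn_expDensity hlam).indicator
      (measurableSet_le (measurable_pi_apply j) measurable_const)
  have hρx : IntegrableOn (fun t => expDensity lam t • x) (orthant n) :=
    (integrableOn_expDensity hlam).smul_const x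
  have hdiff : IntegrableOn (fun t => expDensity lam t • (g t - x)) (orthant n) :=
    integrableOn_expDensity_smul (hg.sub aestronglyMeasurable_const) hC hlam
  have hshift : (∫ t in orthant n, expDensity lam t • g t) - x =
      ∫ t in orthant n, expDensity lam t • (g t - x) := by
    have hρg : IntegrableOn (fun t => expDensity lam t • g t) (orthant n) := by
      refine (hdiff.add hρx).congr_fun (fun t _ => ?_) (measurableSet_orthant n)
      simp [smul_sub]
    simp_rw [smul_sub]
    rw [integral_sub hρg hρx, integral_smul_const, setIntegral_expDensity hlam, one_smul]
  calc ‖(∫ t in orthant n, expDensity lam t • g t) - x‖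
      ≤ ∫ t in orthant n, ‖expDensity lam t • (g t - x)‖ :=
        hshift ▸ norm_integral_le_integral_norm _
    _ ≤ ∫ t in orthant n,
          (η * expDensity lam t + C * ∑ j, {u | u j ≤ M}.indicator (expDensity lam) t) := by
        refine setIntegral_mono_on hdiff.norm
          (((integrableOn_expDensity hlam).const_mul η).add
            ((integrable_finsetSum _ fun j _ => hstrip j).const_mul C))
          (measurableSet_orthant n) fun t ht => ?_
        rw [norm_smul, Real.norm_of_nonneg (hρ t)]
        exact mul_le_add_mul_sum_indicator (hρ t) hη0 hC0 (hC t ht) (hη t ht)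
    _ = η + C * ∑ j, ∫ t in orthant n, {u | u j ≤ M}.indicator (expDensity lam) t := by
        rw [integral_add ((integrableOn_expDensity hlam).const_mul η)
            ((integrable_finsetSum _ fun j _ => hstrip j).const_mul C),
          integral_const_mul, integral_const_mul, integral_finsetSum _ fun j _ => hstrip j,
          setIntegral_expDensity hlam, mul_one]
    _ ≤ η + C * ∑ j, lam j * M := by
        gcongr with j
        exact setIntegral_indicator_expDensity_le hlam hM j
    _ = η + C * M * ∑ j, lam j := by rw [← Finset.sum_mul]; ring

end Laplace

theorem abelian_at_infinity_general [CompleteSpace X]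
    (n : ℕ) (x : X) (f : (Fin n → ℝ) → X) (hf : LocInt f)
    (hbd : ∃ C, ∀ t ∈ orthant n, ‖f t‖ ≤ C)
    (hx : ∀ ε > 0, ∃ M, ∀ t ∈ orthant n, (∀ j, M < t j) → ‖f t - x‖ < ε) :
    (∀ lam : Fin n → ℝ, (∀ j, 0 < lam j) →
      OmegaAbs f (fun j => (lam j : ℂ))) ∧
    (∀ ε > 0, ∃ δ > 0, ∀ lam : Fin n → ℝ, (∀ j, 0 < lam j ∧ lam j < δ) →
      ‖(∏ j, (lam j : ℂ)) • lapTr f (fun j => (lam j : ℂ)) - x‖ < ε) := by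
  obtain ⟨C, hC⟩ := hbd
  refine ⟨fun lam hlam => omegaAbs_of_bounded hf hC hlam, fun ε hε => ?_⟩
  obtain ⟨M₀, hM₀⟩ := hx (ε / 2) (half_pos hε)
  have hC0 : 0 ≤ C := (norm_nonneg _).trans (hC 0 fun _ => le_rfl)
  set M := max M₀ 0
  set K := (C + ‖x‖) * M * n
  have hK : 0 ≤ K := by positivity
  set δ := ε / (2 * (K + 1))
  have hδ : 0 < δ := by positivity
  have hKδ : (K + 1) * δ = ε / 2 := by simp only [δ]; field_simp
  refine ⟨δ, hδ, fun lam hlam => ?_⟩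
  have hsum : ∑ j, lam j ≤ n * δ := by
    simpa using Finset.sum_le_sum fun j (_ : j ∈ Finset.univ) => (hlam j).2.le
  rw [prod_smul_lapTr (fun j => (hlam j).1.ne')]
  calc _ ≤ ε / 2 + (C + ‖x‖) * M * ∑ j, lam j :=
        norm_setIntegral_expDensity_smul_sub_le hf.aestronglyMeasurable_orthant
          (fun t ht => (norm_sub_le _ _).trans (by linarith [hC t ht]))
          (fun t ht htM => (hM₀ t ht fun j => (le_max_left _ _).trans_lt (htM j)).le)
          (le_max_right _ _) fun j => (hlam j).1
    _ ≤ ε / 2 + (C + ‖x‖) * M * (n * δ) := by gcongr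
    _ = ε / 2 + K * δ := by ring
    _ < ε / 2 + (K + 1) * δ := by gcongr; linarith
    _ = ε := by rw [hKδ]; ring

/-- Abelian/Tauberian result at infinity: if `f` is bounded on `[0,∞)^n` and `f(t) → x` as
`t₁ → ∞, …, tₙ → ∞`, then for all real `λⱼ > 0` the Laplace integral converges absolutely at
`λ`, and `λ₁·…·λₙ·(Lf)(λ) → x` as `(λ₁,…,λₙ) → (0⁺,…,0⁺)` within `(0,∞)^n`. -/
theorem abelian_at_infinity [CompleteSpace X]
    (n : ℕ) (hn : 1 ≤ n) (x : X) (f : (Fin n → ℝ) → X) (hf : LocInt f)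
    (hbd : ∃ C, ∀ t ∈ orthant n, ‖f t‖ ≤ C)
    (hx : ∀ ε > 0, ∃ M, ∀ t ∈ orthant n, (∀ j, M < t j) → ‖f t - x‖ < ε) :
    (∀ lam : Fin n → ℝ, (∀ j, 0 < lam j) →
      OmegaAbs f (fun j => (lam j : ℂ))) ∧
    (∀ ε > 0, ∃ δ > 0, ∀ lam : Fin n → ℝ, (∀ j, 0 < lam j ∧ lam j < δ) →
      ‖(∏ j, (lam j : ℂ)) • lapTr f (fun j => (lam j : ℂ)) - x‖ < ε) :=
  abelian_at_infinity_general n x f hf hbd hx
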